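/- For every natural number s ≥ 1 and all natural numbers m and n, the sequence (A_n) satisfies A_{(2m+1)n} = Σ_{i=0}^{m} (-1)^{n(m+i)} · (s^2 + 4)^i · ((2m+1)/(2i+1)) · C(m+i, 2i) · A_n^{2i+1}, where the identity is understood as an equality of rational numbers (each coefficient ((2m+1)/(2i+1))·C(m+i,2i) is in fact an integer) and C(a,b) denotes the binomial coefficient. -/

import Mathlib

def aseq (s : ℕ) : ℕ → ℤ
  | 0 => 0
  | 1 => 1
  | n + 2 => s * aseq s (n + 1) + aseq s n

/-!
Let `α, β = (s ± √(s² + 4)) / 2`, so that `α + β = s`, `α β = -1` and, by Binet,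
`(α - β) A_n = αⁿ - βⁿ`. The Waring-type expansion of `a^(2m+1) - b^(2m+1)` as a polynomial
in `a b` and `a - b`, whose coefficients are `(2m+1)/(2i+1) · C(m+i, 2i)`, applied to
`a = αⁿ`, `b = βⁿ`, writes `(α - β) A_{(2m+1)n}` as `Σ ± (α - β)^(2i+1) A_n^(2i+1)`; since
`(α - β)² = s² + 4`, dividing by `α - β ≠ 0` yields the identity.
-/

open Finset

/-- The integer `(2m+1)/(2i+1) · C(m+i, 2i)`, written without division. -/
def oddPowCoeff (m i : ℕ) : ℕ := (m + i + 1).choose (2 * i + 1) + (m + i).choose (2 * i + 1)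

lemma oddPowCoeff_zero_right (m : ℕ) : oddPowCoeff m 0 = 2 * m + 1 := by
  simp only [oddPowCoeff, add_zero, mul_zero, zero_add, Nat.choose_one_right]
  omega

lemma oddPowCoeff_eq_zero_of_lt {m i : ℕ} (h : m < i) : oddPowCoeff m i = 0 := by
  simp only [oddPowCoeff, Nat.choose_eq_zero_of_lt (by omega : m + i + 1 < 2 * i + 1),
    Nat.choose_eq_zero_of_lt (by omega : m + i < 2 * i + 1)]

lemma oddPowCoeff_add_two (m i : ℕ) :
    oddPowCoeff (m + 2) (i + 1) + oddPowCoeff m (i + 1) =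
      2 * oddPowCoeff (m + 1) (i + 1) + oddPowCoeff (m + 1) i := by
  have h₁ : (m + i + 4).choose (2 * i + 3) =
      (m + i + 3).choose (2 * i + 2) + (m + i + 3).choose (2 * i + 3) :=
    Nat.choose_succ_succ' _ _
  have h₂ : (m + i + 3).choose (2 * i + 2) =
      (m + i + 2).choose (2 * i + 1) + (m + i + 2).choose (2 * i + 2) :=
    Nat.choose_succ_succ' _ _
  have h₃ : (m + i + 2).choose (2 * i + 2) =
      (m + i + 1).choose (2 * i + 1) + (m + i + 1).choose (2 * i + 2) :=
    Nat.choose_succ_succ' _ _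
  have h₄ : (m + i + 2).choose (2 * i + 3) =
      (m + i + 1).choose (2 * i + 2) + (m + i + 1).choose (2 * i + 3) :=
    Nat.choose_succ_succ' _ _
  simp only [oddPowCoeff]
  ring_nf at h₁ h₂ h₃ h₄ ⊢
  omega

lemma two_mul_add_one_mul_choose (m i : ℕ) :
    (2 * m + 1) * (m + i).choose (2 * i) = (2 * i + 1) * oddPowCoeff m i := by
  rcases lt_or_ge m i with h | h
  · rw [oddPowCoeff_eq_zero_of_lt h, Nat.choose_eq_zero_of_lt (by omega), mul_zero, mul_zero]
  · have h₁ := Nat.add_one_mul_choose_eq (m + i) (2 * i)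
    have h₂ := Nat.choose_succ_right_eq (m + i) (2 * i)
    rw [show m + i - 2 * i = m - i by omega] at h₂
    simp only [oddPowCoeff]
    zify [h] at *
    linear_combination h₁ - h₂

section OddPowers

variable {R : Type*} [CommRing R]

def oddPowExpansion (p t : R) (m : ℕ) : R :=
  ∑ i ∈ range (m + 1), (oddPowCoeff m i : R) * p ^ (m - i) * t ^ (2 * i + 1)

lemma pow_mul_oddPowExpansion (p t : R) (m k : ℕ) :
    p ^ k * oddPowExpansion p t m =
      ∑ i ∈ range (m + k + 1), (oddPowCoeff m i : R) * p ^ (m + k - i) * t ^ (2 * i + 1) := by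
  rw [oddPowExpansion, show m + k + 1 = m + 1 + k by ring, sum_range_add _ (m + 1) k, mul_sum]
  have htail : ∑ j ∈ range k,
      (oddPowCoeff m (m + 1 + j) : R) * p ^ (m + k - (m + 1 + j)) *
        t ^ (2 * (m + 1 + j) + 1) = 0 :=
    sum_eq_zero fun j _ ↦ by rw [oddPowCoeff_eq_zero_of_lt (by omega), Nat.cast_zero, zero_mul,
      zero_mul]
  rw [htail, add_zero]
  refine sum_congr rfl fun i hi ↦ ?_
  rw [show m + k - i = k + (m - i) by have := mem_range.1 hi; omega, pow_add]
  ring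

lemma oddPowExpansion_add_two (p t : R) (m : ℕ) :
    oddPowExpansion p t (m + 2) + p ^ 2 * oddPowExpansion p t m -
      2 * p * oddPowExpansion p t (m + 1) = t ^ 2 * oddPowExpansion p t (m + 1) := by
  calc _ = ∑ i ∈ range (m + 2 + 1), ((oddPowCoeff (m + 2) i + oddPowCoeff m i : ℕ) -
          2 * (oddPowCoeff (m + 1) i : R)) * p ^ (m + 2 - i) * t ^ (2 * i + 1) := by
        have h₁ := pow_mul_oddPowExpansion p t (m + 1) 1
        rw [pow_one] at h₁
        rw [pow_mul_oddPowExpansion, mul_assoc, h₁, oddPowExpansion, mul_sum, ← sum_add_distrib,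
          ← sum_sub_distrib]
        refine sum_congr rfl fun i _ ↦ ?_
        push_cast
        ring
    _ = ∑ i ∈ range (m + 1 + 1),
          (oddPowCoeff (m + 1) i : R) * p ^ (m + 1 - i) * t ^ (2 * i + 3) := by
        rw [sum_range_succ']
        simp only [oddPowCoeff_zero_right, oddPowCoeff_add_two]
        push_cast
        rw [show 2 * ((m : R) + 2) + 1 + (2 * m + 1) - 2 * (2 * (m + 1) + 1) = 0 by ring, zero_mul,
          zero_mul, add_zero]
        exact sum_congr rfl fun i _ ↦ by ring
    _ = _ := by
        rw [oddPowExpansion, mul_sum]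
        refine sum_congr rfl fun i _ ↦ ?_
        ring

theorem pow_sub_pow_odd_eq_oddPowExpansion (a b : R) (m : ℕ) :
    a ^ (2 * m + 1) - b ^ (2 * m + 1) = oddPowExpansion (a * b) (a - b) m := by
  induction m using Nat.twoStepInduction with
  | zero => simp [oddPowExpansion, oddPowCoeff]
  | one => simp [oddPowExpansion, oddPowCoeff, sum_range_succ]; ring
  | more m ih₀ ih₁ =>
    linear_combination ((a - b) ^ 2 + 2 * (a * b)) * ih₁ - (a * b) ^ 2 * ih₀ -
      oddPowExpansion_add_two (a * b) (a - b) m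

end OddPowers

lemma sub_mul_aseq {R : Type*} [CommRing R] {s : ℕ} {α β : R} (hsum : α + β = s)
    (hprod : α * β = -1) (n : ℕ) : (α - β) * aseq s n = α ^ n - β ^ n := by
  induction n using Nat.twoStepInduction with
  | zero => simp [aseq]
  | one => simp [aseq]
  | more n ih₀ ih₁ =>
    simp only [aseq, Int.cast_add, Int.cast_mul, Int.cast_natCast]
    linear_combination (s : R) * ih₁ + ih₀ - (α ^ (n + 1) - β ^ (n + 1)) * hsum +
      (α ^ n - β ^ n) * hprod

theorem aseq_odd_mul_eq_sum (s m n : ℕ) :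
    aseq s ((2 * m + 1) * n) = ∑ i ∈ range (m + 1),
      (oddPowCoeff m i : ℤ) * ((-1) ^ n) ^ (m - i) * ((s : ℤ) ^ 2 + 4) ^ i *
        aseq s n ^ (2 * i + 1) := by
  set δ : ℝ := √((s : ℝ) ^ 2 + 4)
  have hδ : δ ^ 2 = (s : ℝ) ^ 2 + 4 := Real.sq_sqrt (by positivity)
  have hδ₀ : δ ≠ 0 := (Real.sqrt_pos.2 (by positivity)).ne'
  have hbinet := sub_mul_aseq (α := (s + δ) / 2) (β := (s - δ) / 2) (by ring)
    (by linear_combination -hδ / 4)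
  simp only [show ((s : ℝ) + δ) / 2 - (s - δ) / 2 = δ by ring] at hbinet
  have hodd : ∀ i : ℕ, (δ * aseq s n) ^ (2 * i + 1) =
      δ * (((s : ℝ) ^ 2 + 4) ^ i * aseq s n ^ (2 * i + 1)) := by
    intro i; rw [mul_pow, pow_succ, pow_mul, hδ]; ring
  have hmul : δ * aseq s ((2 * m + 1) * n) = δ * ∑ i ∈ range (m + 1),
      (oddPowCoeff m i : ℝ) * ((-1) ^ n) ^ (m - i) * ((s : ℝ) ^ 2 + 4) ^ i *
        aseq s n ^ (2 * i + 1) := by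
    rw [hbinet, mul_comm (2 * m + 1), pow_mul, pow_mul, pow_sub_pow_odd_eq_oddPowExpansion,
      ← mul_pow, ← hbinet, oddPowExpansion, mul_sum]
    refine sum_congr rfl fun i _ ↦ ?_
    rw [hodd, show ((s : ℝ) + δ) / 2 * ((s - δ) / 2) = -1 by linear_combination -hδ / 4]
    ring
  exact_mod_cast mul_left_cancel₀ hδ₀ hmul

theorem aseq_odd_mul_general (s : ℕ) (m n : ℕ) :
    (aseq s ((2 * m + 1) * n) : ℚ) =
      ∑ i ∈ Finset.range (m + 1),
        (-1 : ℚ) ^ (n * (m + i)) * ((s : ℚ) ^ 2 + 4) ^ i * ((2 * m + 1 : ℚ) / (2 * i + 1)) *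
          (Nat.choose (m + i) (2 * i) : ℚ) * (aseq s n : ℚ) ^ (2 * i + 1) := by
  rw [aseq_odd_mul_eq_sum]
  push_cast
  refine sum_congr rfl fun i hi ↦ ?_
  have hi : i ≤ m := Nat.lt_succ_iff.1 (mem_range.1 hi)
  have hsign : (-1 : ℚ) ^ (n * (m + i)) = ((-1) ^ n) ^ (m - i) := by
    have hsq : ((-1 : ℚ) ^ n) ^ 2 = 1 := by
      rw [← pow_mul, mul_comm, pow_mul, neg_one_sq, one_pow]
    rw [pow_mul, show m + i = m - i + 2 * i by omega, pow_add, pow_mul _ 2 i, hsq, one_pow,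
      mul_one]
  have hcoeff : ((2 * m + 1 : ℚ) / (2 * i + 1)) * (m + i).choose (2 * i) = oddPowCoeff m i := by
    rw [div_mul_eq_mul_div, div_eq_iff (by positivity)]
    exact_mod_cast (two_mul_add_one_mul_choose m i).trans (mul_comm _ _)
  rw [hsign, ← hcoeff]
  ring

theorem aseq_odd_mul (s : ℕ) (hs : 1 ≤ s) (m n : ℕ) :
    (aseq s ((2 * m + 1) * n) : ℚ) =
      ∑ i ∈ Finset.range (m + 1),
        (-1 : ℚ) ^ (n * (m + i)) * ((s : ℚ) ^ 2 + 4) ^ i * ((2 * m + 1 : ℚ) / (2 * i + 1)) *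
          (Nat.choose (m + i) (2 * i) : ℚ) * (aseq s n : ℚ) ^ (2 * i + 1) :=
  aseq_odd_mul_general s m n
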